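/- With F, N, G = F/N as in the Möbius-type example (N_x = {0} for x < 0, N_x = ℤ for x ≥ 0), there is no topology on G making it a topological groupoid such that the quotient map q restricted to W' = ℝ × (-1/4, 1/4) is an open embedding: indeed the section s : ℝ → G, x ↦ q(x, 1/8), is continuous, but the section 9s = x ↦ q(x, 9/8) is not continuous at 0, since q(x,9/8) = q(x,1/8) for x ≥ 0 while q(x,9/8) ≠ q(x,t) for any t ∈ (-1/4,1/4) when x < 0. -/

import Mathlib

/-!
The section `s = q(·, 1/8)` lands in the open set `q(W')`, so it is continuous, and a continuous
composition would make its ninefold fibrewise sum `q(·, 9/8)` continuous as well. But at `x ≥ 0`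
the fibre is `ℝ/ℤ` and `q(x, 9/8) = q(x, 1/8) ∈ q(W')`, whereas at `x < 0` the fibre is `ℝ` and
`q(x, 9/8) ∉ q(W')`; so `q(·, 9/8)` leaves the open neighbourhood `q(W')` of its value at `0`
immediately to the left of `0`.
-/

/-- The subgroup `N_x ≤ ℝ`: trivial for `x < 0` and `ℤ` for `x ≥ 0`. -/
noncomputable def Nsub (x : ℝ) : AddSubgroup ℝ :=
  if x < 0 then ⊥ else AddSubgroup.zmultiples (1 : ℝ)

/-- Arrows of the quotient groupoid `G = F/N`: over `x` the fibre is `ℝ/N_x`. -/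
def GArr : Type := (x : ℝ) × (ℝ ⧸ Nsub x)

/-- The quotient map `q : F = ℝ × ℝ → G`. -/
noncomputable def q (p : ℝ × ℝ) : GArr := ⟨p.1, QuotientAddGroup.mk p.2⟩

/-- `W' = ℝ × (-1/4, 1/4) ⊆ F`. -/
def W' : Set (ℝ × ℝ) := Set.univ ×ˢ Set.Ioo (-(1/4) : ℝ) (1/4)

/-- Fibrewise composition on `G` (meaningful on pairs over the same point). -/
noncomputable def gcomp (a b : GArr) : GArr :=
  if h : b.1 = a.1 then ⟨a.1, a.2 + h ▸ b.2⟩ else a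

open Set Topology

lemma gcomp_q (x a b : ℝ) : gcomp (q (x, a)) (q (x, b)) = q (x, a + b) := by
  simp [gcomp, q]
  rfl

lemma q_add_intCast_of_nonneg {x : ℝ} (hx : 0 ≤ x) (t : ℝ) (n : ℤ) :
    q (x, t + n) = q (x, t) := by
  refine congrArg (Sigma.mk x) (QuotientAddGroup.eq.mpr ?_)
  rw [Nsub, if_neg (not_lt.mpr hx)]
  exact ⟨-n, by simp⟩

lemma q_nine_eighths_of_nonneg {x : ℝ} (hx : 0 ≤ x) : q (x, 9/8) = q (x, 1/8) := by
  convert q_add_intCast_of_nonneg hx (1/8) 1 using 3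
  norm_num

lemma q_inj_of_neg {x : ℝ} (hx : x < 0) {s t : ℝ} : q (x, s) = q (x, t) ↔ s = t := by
  refine ⟨fun h => ?_, fun h => h ▸ rfl⟩
  have hmem := QuotientAddGroup.eq.mp (eq_of_heq (Sigma.mk.inj_iff.mp h).2)
  rw [Nsub, if_pos hx, AddSubgroup.mem_bot] at hmem
  linarith

lemma q_mem_range_iff_of_neg {x : ℝ} (hx : x < 0) (t : ℝ) :
    q (x, t) ∈ range (fun w : W' => q w.val) ↔ t ∈ Ioo (-(1/4) : ℝ) (1/4) := by
  constructor
  · rintro ⟨⟨⟨y, s⟩, hs⟩, hq⟩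
    obtain rfl : y = x := congrArg Sigma.fst hq
    rw [q_inj_of_neg hx] at hq
    exact hq ▸ hs.2
  · exact fun ht => ⟨⟨(x, t), mem_univ x, ht⟩, rfl⟩

lemma not_continuousAt_of_mem_of_forall_lt_notMem {Y : Type*} [TopologicalSpace Y]
    {f : ℝ → Y} {U : Set Y} {a : ℝ} (hU : IsOpen U) (ha : f a ∈ U)
    (hlt : ∀ x < a, f x ∉ U) : ¬ ContinuousAt f a := by
  intro hf
  have hpre : f ⁻¹' U ∈ 𝓝[<] a := mem_nhdsWithin_of_mem_nhds (hf.preimage_mem_nhds (hU.mem_nhds ha))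
  obtain ⟨x, hxU, hxa⟩ := Filter.nonempty_of_mem (Filter.inter_mem hpre self_mem_nhdsWithin)
  exact hlt x hxa hxU

section

variable [TopologicalSpace GArr]

lemma continuous_q_of_mem_Ioo (hq : IsOpenEmbedding (fun w : W' => q w.val)) {t : ℝ}
    (ht : t ∈ Ioo (-(1/4) : ℝ) (1/4)) : Continuous fun x : ℝ => q (x, t) :=
  hq.continuous.comp ((continuous_id.prodMk continuous_const).subtype_mk fun x => ⟨mem_univ x, ht⟩)

lemma not_continuousAt_q_nine_eighths (hq : IsOpenEmbedding (fun w : W' => q w.val)) :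
    ¬ ContinuousAt (fun x : ℝ => q (x, 9/8)) 0 := by
  refine not_continuousAt_of_mem_of_forall_lt_notMem hq.isOpen_range ?_ fun x hx => ?_
  · rw [q_nine_eighths_of_nonneg le_rfl]
    exact ⟨⟨(0, 1/8), mem_univ 0, by norm_num⟩, rfl⟩
  · rw [q_mem_range_iff_of_neg hx]
    norm_num

variable (hcomp : Continuous fun p : {p : GArr × GArr // p.2.1 = p.1.1} => gcomp p.val.1 p.val.2)
include hcomp

lemma continuous_q_add {a b : ℝ} (ha : Continuous fun x : ℝ => q (x, a))
    (hb : Continuous fun x : ℝ => q (x, b)) : Continuous fun x : ℝ => q (x, a + b) := by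
  simpa only [Function.comp_def, gcomp_q] using
    hcomp.comp ((ha.prodMk hb).subtype_mk fun x => (rfl : (q (x, b)).1 = (q (x, a)).1))

lemma continuous_q_natCast_add_one_mul {a : ℝ} (ha : Continuous fun x : ℝ => q (x, a)) (n : ℕ) :
    Continuous fun x : ℝ => q (x, (n + 1) * a) := by
  induction n with
  | zero => simpa using ha
  | succ n ih => simpa [add_mul, add_assoc] using continuous_q_add hcomp ih ha

end

/-- `q(x,9/8) = q(x,1/8)` for `x ≥ 0`, while `q(x,9/8) ≠ q(x,t)` for any
`t ∈ (-1/4,1/4)` when `x < 0`; consequently, for any topology on `G` for which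
`q|W'` is an open embedding, the section `s : x ↦ q(x,1/8)` is continuous but
`9s : x ↦ q(x,9/8)` is not continuous at `0`; hence there is no topology on `G`
making it a topological groupoid (composition continuous) with `q|W'` an open
embedding. -/
theorem no_topological_groupoid_structure :
    (∀ x : ℝ, 0 ≤ x → q (x, 9/8) = q (x, 1/8)) ∧
    (∀ x : ℝ, x < 0 → ∀ t ∈ Set.Ioo (-(1/4) : ℝ) (1/4), q (x, 9/8) ≠ q (x, t)) ∧
    (∀ T : TopologicalSpace GArr,
      @Topology.IsOpenEmbedding _ _ _ T (fun w : W' => q w.val) →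
      @Continuous _ _ _ T (fun x : ℝ => q (x, 1/8)) ∧
      ¬ @ContinuousAt _ _ _ T (fun x : ℝ => q (x, 9/8)) 0) ∧
    ¬ ∃ T : TopologicalSpace GArr,
        @Topology.IsOpenEmbedding _ _ _ T (fun w : W' => q w.val) ∧
        @Continuous {p : GArr × GArr // p.2.1 = p.1.1} GArr
          (@instTopologicalSpaceSubtype _ _ (@instTopologicalSpaceProd _ _ T T)) T
          (fun p => gcomp p.val.1 p.val.2) := by
  have sections (T : TopologicalSpace GArr) (hq : IsOpenEmbedding (fun w : W' => q w.val)) :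
      Continuous (fun x : ℝ => q (x, 1/8)) ∧ ¬ ContinuousAt (fun x : ℝ => q (x, 9/8)) 0 :=
    ⟨continuous_q_of_mem_Ioo hq (by norm_num), not_continuousAt_q_nine_eighths hq⟩
  refine ⟨fun x => q_nine_eighths_of_nonneg, fun x hx t ht => ?_, sections, ?_⟩
  · rw [Ne, q_inj_of_neg hx]
    exact fun h => by linarith [h ▸ ht.2]
  · rintro ⟨T, hq, hcomp⟩
    obtain ⟨hs, hns⟩ := sections T hq
    have h9 := continuous_q_natCast_add_one_mul hcomp hs 8
    norm_num at h9
    exact hns h9.continuousAt
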